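/- Let Q be a quadrature rule on the reference triangle T that is exact for degree ≤ d. Then for every m ∈ ℕ, every real polynomial p in two variables of total degree ≤ d+1, and H its degree-(d+1) homogeneous component, the m-fold composite error satisfies E_m(p) = ((3 + (−1)^{d+1}) / 2^{d+3})^m · E_Q(H). -/

import Mathlib

open MeasureTheory

/-- The reference triangle: convex hull of (0,0), (1,0), (0,1). -/
noncomputable def refTriangle : Set (ℝ × ℝ) :=
  convexHull ℝ ({(0, 0), (1, 0), (0, 1)} : Set (ℝ × ℝ))

/-- Evaluation of a bivariate polynomial at a point of ℝ². -/
noncomputable def evalP (p : MvPolynomial (Fin 2) ℝ) (q : ℝ × ℝ) : ℝ :=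
  MvPolynomial.eval ![q.1, q.2] p

/-- Action of the quadrature rule with nodes `x` and weights `w`: Q(f) = ∑ wᵢ f(xᵢ). -/
noncomputable def quadApply {n : ℕ} (x : Fin n → ℝ × ℝ) (w : Fin n → ℝ)
    (f : ℝ × ℝ → ℝ) : ℝ :=
  ∑ i, w i * f (x i)

/-- Error functional of the quadrature rule: E_Q(f) = ∫_T f - Q(f). -/
noncomputable def errQ {n : ℕ} (x : Fin n → ℝ × ℝ) (w : Fin n → ℝ)
    (f : ℝ × ℝ → ℝ) : ℝ :=
  (∫ q in refTriangle, f q) - quadApply x w f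

/-- Exactness of the quadrature rule for all polynomials of total degree ≤ d. -/
def ExactDeg {n : ℕ} (x : Fin n → ℝ × ℝ) (w : Fin n → ℝ) (d : ℕ) : Prop :=
  ∀ p : MvPolynomial (Fin 2) ℝ, p.totalDegree ≤ d →
    (∫ q in refTriangle, evalP p q) = quadApply x w (evalP p)

/-- The four midpoint-subdivision affine maps A₁, A₂, A₃, A₄. -/
noncomputable def subdivMap : Fin 4 → (ℝ × ℝ) → (ℝ × ℝ) :=
  ![fun v => (1/2 + v.1/2, v.2/2),
    fun v => (v.1/2, 1/2 + v.2/2),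
    fun v => (v.1/2, v.2/2),
    fun v => (1/2 - v.1/2, 1/2 - v.2/2)]

/-- Composition A_{s 0} ∘ A_{s 1} ∘ ⋯ ∘ A_{s (m-1)}. -/
noncomputable def compSubdiv : {m : ℕ} → (Fin m → Fin 4) → (ℝ × ℝ) → (ℝ × ℝ)
  | 0, _ => id
  | _ + 1, s => subdivMap (s 0) ∘ compSubdiv (fun i => s i.succ)

/-- The m-fold composite rule Q_m(f) = 4⁻ᵐ ∑_{s ∈ {1,2,3,4}ᵐ} Q(f ∘ A_{s₁} ∘ ⋯ ∘ A_{sₘ}). -/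
noncomputable def Qm {n : ℕ} (x : Fin n → ℝ × ℝ) (w : Fin n → ℝ) (m : ℕ)
    (f : ℝ × ℝ → ℝ) : ℝ :=
  ((4 : ℝ) ^ m)⁻¹ * ∑ s : Fin m → Fin 4, quadApply x w (f ∘ compSubdiv s)

/-- Error of the m-fold composite rule: E_m(f) = ∫_T f - Q_m(f). -/
noncomputable def Em {n : ℕ} (x : Fin n → ℝ × ℝ) (w : Fin n → ℝ) (m : ℕ)
    (f : ℝ × ℝ → ℝ) : ℝ :=
  (∫ q in refTriangle, f q) - Qm x w m f

/-!
Midpoint subdivision cuts `T` into the four triangles `A_a(T)`, and each `A_a` is a homothety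
`v ↦ t_a + c_a • v` with `c_a = ±1/2`, so its Jacobian is `1/4`. Hence
`E_{m+1}(f) = 1/4 ∑_a E_m(f ∘ A_a)`. If `p` has degree `≤ d + 1`, so has `p ∘ A_a`, and its
degree-`(d+1)` component is `c_a ^ (d+1) • H`; since `E_Q` kills degree `≤ d`, only this top
component contributes. Each subdivision step therefore multiplies the error by
`1/4 ∑_a c_a ^ (d+1) = (3 + (-1)^(d+1)) / 2^(d+3)`.
-/

namespace MvPolynomial

open Finset

variable {σ τ R : Type*} [CommSemiring R]

attribute [local instance] gradedAlgebra

theorem homogeneousComponent_mul_of_totalDegree_le {p q : MvPolynomial σ R} {m n : ℕ}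
    (hp : p.totalDegree ≤ m) (hq : q.totalDegree ≤ n) :
    homogeneousComponent (m + n) (p * q) = homogeneousComponent m p * homogeneousComponent n q := by
  have hterm : ∀ i ≤ m, homogeneousComponent (m + n) (homogeneousComponent i p * q) =
      if m = i then homogeneousComponent m p * homogeneousComponent n q else 0 := by
    intro i hi
    have h := DirectSum.coe_decompose_mul_of_left_mem_of_le (homogeneousSubmodule σ R)
      (homogeneousComponent_mem i p) (b := q) (n := m + n) (by omega)
    simp only [DirectSum.decompose, Equiv.coe_fn_mk, decomposition.decompose'_apply] at h
    rw [h]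
    split_ifs with him
    · subst him
      rw [Nat.add_sub_cancel_left]
    · rw [homogeneousComponent_eq_zero (m + n - i) q (by omega), mul_zero]
  conv_lhs => rw [← sum_homogeneousComponent p]
  rw [sum_mul, map_sum, sum_congr rfl fun i hi => hterm i (by simp at hi; omega),
    sum_ite_eq]
  split_ifs with h
  · rfl
  · rw [homogeneousComponent_eq_zero _ _ (by simp at h; omega), zero_mul]

theorem homogeneousComponent_pow_of_totalDegree_le {p : MvPolynomial σ R} {m : ℕ}
    (hp : p.totalDegree ≤ m) (k : ℕ) :
    homogeneousComponent (m * k) (p ^ k) = homogeneousComponent m p ^ k := by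
  induction k with
  | zero => simp
  | succ k ih =>
    rw [pow_succ, pow_succ, Nat.mul_succ, homogeneousComponent_mul_of_totalDegree_le
      ((totalDegree_pow p k).trans (by rw [mul_comm]; gcongr)) hp, ih]

theorem homogeneousComponent_prod_of_totalDegree_le {ι : Type*} (s : Finset ι)
    (f : ι → MvPolynomial σ R) (n : ι → ℕ) (hf : ∀ i ∈ s, (f i).totalDegree ≤ n i) :
    homogeneousComponent (∑ i ∈ s, n i) (∏ i ∈ s, f i) =
      ∏ i ∈ s, homogeneousComponent (n i) (f i) := by
  classical
  induction s using Finset.induction_on with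
  | empty => simp
  | insert a s ha ih =>
    have hs : ∀ i ∈ s, (f i).totalDegree ≤ n i := fun i hi => hf i (mem_insert_of_mem hi)
    rw [sum_insert ha, prod_insert ha, prod_insert ha,
      homogeneousComponent_mul_of_totalDegree_le (hf a (mem_insert_self a s))
        ((totalDegree_finsetProd _ _).trans (sum_le_sum hs)), ih hs]

theorem totalDegree_bind₁_le {g : σ → MvPolynomial τ R} (hg : ∀ i, (g i).totalDegree ≤ 1)
    (p : MvPolynomial σ R) : (bind₁ g p).totalDegree ≤ p.totalDegree := by
  conv_lhs => rw [p.as_sum]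
  rw [map_sum]
  refine totalDegree_finsetSum_le fun d hd => ?_
  rw [bind₁_monomial]
  calc _ ≤ (C (coeff d p)).totalDegree + (∏ i ∈ d.support, g i ^ d i).totalDegree :=
        totalDegree_mul _ _
    _ ≤ 0 + ∑ i ∈ d.support, d i := by
        rw [totalDegree_C]
        gcongr
        refine (totalDegree_finsetProd _ _).trans (sum_le_sum fun i _ => ?_)
        exact (totalDegree_pow _ _).trans (by nlinarith [hg i])
    _ ≤ p.totalDegree := by
        rw [zero_add]
        exact le_totalDegree hd

theorem homogeneousComponent_bind₁_of_totalDegree_le {g : σ → MvPolynomial τ R}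
    (hg : ∀ i, (g i).totalDegree ≤ 1) {p : MvPolynomial σ R} {n : ℕ} (hp : p.totalDegree ≤ n) :
    homogeneousComponent n (bind₁ g p) =
      bind₁ (fun i => homogeneousComponent 1 (g i)) (homogeneousComponent n p) := by
  conv_lhs => rw [p.as_sum]
  conv_rhs => rw [p.as_sum]
  simp only [map_sum]
  refine sum_congr rfl fun d hd => ?_
  have hd_le : d.degree ≤ n := (le_totalDegree hd).trans hp
  rw [homogeneousComponent_of_mem (isHomogeneous_monomial _ rfl)]
  split_ifs with hn
  · subst hn
    rw [bind₁_monomial, bind₁_monomial, homogeneousComponent_C_mul, Finsupp.degree_apply,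
      homogeneousComponent_prod_of_totalDegree_le _ _ _ fun i _ =>
        (totalDegree_pow _ _).trans (by nlinarith [hg i])]
    refine congrArg _ (prod_congr rfl fun i _ => ?_)
    simpa using homogeneousComponent_pow_of_totalDegree_le (hg i) (d i)
  · rw [map_zero]
    refine homogeneousComponent_eq_zero _ _ ((totalDegree_bind₁_le hg _).trans_lt ?_)
    exact (totalDegree_monomial_le _ _).trans_lt (lt_of_le_of_ne hd_le (Ne.symm hn))

theorem IsHomogeneous.bind₁_C_mul_X {φ : MvPolynomial σ R} {n : ℕ} (hφ : φ.IsHomogeneous n)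
    (c : R) : bind₁ (fun i => C c * X i) φ = c ^ n • φ := by
  conv_lhs => rw [φ.as_sum]
  conv_rhs => rw [φ.as_sum]
  rw [map_sum, smul_sum]
  refine sum_congr rfl fun d hd => ?_
  rw [bind₁_monomial, hφ.degree_eq_sum_deg_support hd]
  simp_rw [mul_pow, prod_mul_distrib, ← map_pow, ← map_prod, prod_pow_eq_pow_sum, monomial_eq,
    smul_eq_C_mul, Finsupp.prod, map_pow]
  ring

theorem totalDegree_C_add_C_mul_X_le (b c : R) (i : σ) :
    (C b + C c * X i : MvPolynomial σ R).totalDegree ≤ 1 :=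
  (totalDegree_add _ _).trans (max_le (by simp) (isHomogeneous_C_mul_X c i).totalDegree_le)

theorem homogeneousComponent_bind₁_C_add_C_mul_X (b : σ → R) (c : R) {p : MvPolynomial σ R}
    {n : ℕ} (hp : p.totalDegree ≤ n) :
    homogeneousComponent n (bind₁ (fun i => C (b i) + C c * X i) p) =
      c ^ n • homogeneousComponent n p := by
  have hlin : ∀ i, homogeneousComponent 1 (C (b i) + C c * X i) = C c * X i := fun i => by
    rw [map_add, homogeneousComponent_of_mem (isHomogeneous_C σ (b i)),
      homogeneousComponent_eq_self (isHomogeneous_C_mul_X c i), if_neg one_ne_zero, zero_add]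
  rw [homogeneousComponent_bind₁_of_totalDegree_le (fun _ => totalDegree_C_add_C_mul_X_le _ _ _)
    hp, _root_.funext hlin, (homogeneousComponent_isHomogeneous n p).bind₁_C_mul_X]

theorem totalDegree_sub_homogeneousComponent_le {R : Type*} [CommRing R]
    {p : MvPolynomial σ R} {n : ℕ} (hp : p.totalDegree ≤ n + 1) :
    (p - homogeneousComponent (n + 1) p).totalDegree ≤ n := by
  refine Finset.sup_le fun d hd => ?_
  rw [mem_support_iff, coeff_sub, coeff_homogeneousComponent] at hd
  have hd_le : d.degree ≤ n + 1 :=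
    (le_totalDegree (mem_support_iff.2 fun h => hd (by simp [h]))).trans hp
  split_ifs at hd with h
  · simp at hd
  · exact Nat.le_of_lt_succ (lt_of_le_of_ne hd_le h)

end MvPolynomial

open MeasureTheory Module MvPolynomial

theorem mem_image_homothety_iff {𝕜 E : Type*} [Field 𝕜] [AddCommGroup E] [Module 𝕜 E]
    {t u : E} {c : 𝕜} (hc : c ≠ 0) (s : Set E) :
    u ∈ (fun v => t + c • v) '' s ↔ c⁻¹ • (u - t) ∈ s := by
  constructor
  · rintro ⟨v, hv, rfl⟩
    simpa [smul_smul, hc] using hv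
  · intro h
    exact ⟨_, h, by simp [smul_smul, hc]⟩

theorem setIntegral_image_homothety {E F : Type*} [NormedAddCommGroup E] [NormedSpace ℝ E]
    [FiniteDimensional ℝ E] [MeasurableSpace E] [BorelSpace E] (μ : Measure E)
    [μ.IsAddHaarMeasure] [NormedAddCommGroup F] [NormedSpace ℝ F] {s : Set E}
    (hs : MeasurableSet s) (t : E) {c : ℝ} (hc : c ≠ 0) (f : E → F) :
    ∫ v in (fun v => t + c • v) '' s, f v ∂μ = |c| ^ finrank ℝ E • ∫ v in s, f (t + c • v) ∂μ := by
  have hder : ∀ v ∈ s, HasFDerivWithinAt (fun v => t + c • v)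
      (c • ContinuousLinearMap.id ℝ E) s v :=
    fun v _ => (((hasFDerivAt_id v).const_smul c).const_add t).hasFDerivWithinAt
  have hinj : Set.InjOn (fun v => t + c • v) s :=
    fun u _ v _ h => smul_right_injective E hc (add_left_cancel h)
  rw [integral_image_eq_integral_abs_det_fderiv_smul μ hs hder hinj f]
  simp [ContinuousLinearMap.det, LinearMap.det_smul, abs_pow, integral_smul]

theorem volume_setOf_snd_eq_zero {g : ℝ → ℝ} (hg : Measurable g) :
    volume {v : ℝ × ℝ | v.2 = g v.1} = 0 := by
  have hm : MeasurableSet {v : ℝ × ℝ | v.2 = g v.1} :=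
    measurableSet_eq_fun measurable_snd (hg.comp measurable_fst)
  rw [Measure.volume_eq_prod, Measure.prod_apply hm]
  simp [Set.preimage]

theorem volume_setOf_fst_eq_zero (c : ℝ) : volume {v : ℝ × ℝ | v.1 = c} = 0 := by
  have h : {v : ℝ × ℝ | v.1 = c} = {c} ×ˢ Set.univ := by ext; simp
  rw [h, Measure.volume_eq_prod, Measure.prod_prod, Real.volume_singleton, zero_mul]

theorem refTriangle_eq : refTriangle = {v : ℝ × ℝ | 0 ≤ v.1 ∧ 0 ≤ v.2 ∧ v.1 + v.2 ≤ 1} := by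
  refine (convexHull_min ?_ ?_).antisymm ?_
  · rintro v (rfl | rfl | rfl) <;> norm_num
  · rintro u ⟨hu₁, hu₂, hu⟩ v ⟨hv₁, hv₂, hv⟩ a b ha hb hab
    simp only [Set.mem_ofPred_eq, Prod.fst_add, Prod.snd_add, Prod.smul_fst, Prod.smul_snd,
      smul_eq_mul]
    refine ⟨by positivity, by positivity, by nlinarith⟩
  · rintro ⟨x, y⟩ ⟨hx, hy, hxy⟩
    have hmem := (convex_convexHull ℝ ({(0, 0), (1, 0), (0, 1)} : Set (ℝ × ℝ))).sum_mem
      (t := Finset.univ) (w := ![1 - x - y, x, y]) (z := ![(0, 0), (1, 0), (0, 1)])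
      (fun i _ => by fin_cases i <;> simp <;> linarith) (by simp [Fin.sum_univ_three]; ring)
      (fun i _ => subset_convexHull ℝ _ (by fin_cases i <;> simp))
    simpa [Fin.sum_univ_three] using hmem

theorem isCompact_refTriangle : IsCompact refTriangle :=
  (Set.toFinite _).isCompact_convexHull ℝ

noncomputable def subdivShift : Fin 4 → ℝ × ℝ := ![(1/2, 0), (0, 1/2), (0, 0), (1/2, 1/2)]

noncomputable def subdivScale : Fin 4 → ℝ := ![1/2, 1/2, 1/2, -1/2]

theorem subdivScale_ne_zero (a : Fin 4) : subdivScale a ≠ 0 := by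
  fin_cases a <;> norm_num [subdivScale]

theorem subdivMap_eq (a : Fin 4) : subdivMap a = fun v => subdivShift a + subdivScale a • v := by
  funext v
  fin_cases a <;> ext <;> simp [subdivMap, subdivShift, subdivScale] <;> ring

theorem sum_subdivScale_pow (k : ℕ) : ∑ a, subdivScale a ^ k = (3 + (-1) ^ k) / 2 ^ k := by
  simp only [Fin.sum_univ_four, subdivScale, Matrix.cons_val_zero, Matrix.cons_val_one,
    Matrix.cons_val, one_div, inv_pow, div_pow]
  ring

theorem mem_subdivMap_image_iff (a : Fin 4) (u : ℝ × ℝ) :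
    u ∈ subdivMap a '' refTriangle ↔ (subdivScale a)⁻¹ • (u - subdivShift a) ∈ refTriangle := by
  rw [subdivMap_eq]
  exact mem_image_homothety_iff (subdivScale_ne_zero a) _

theorem iUnion_subdivMap_image : ⋃ a, subdivMap a '' refTriangle = refTriangle := by
  ext u
  simp only [Set.mem_iUnion, mem_subdivMap_image_iff, Fin.exists_fin_succ]
  simp [refTriangle_eq, subdivShift, subdivScale]
  constructor
  · rintro (⟨h₁, h₂, h₃⟩ | ⟨h₁, h₂, h₃⟩ | ⟨h₁, h₂, h₃⟩ | ⟨h₁, h₂, h₃⟩) <;>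
      exact ⟨by linarith, by linarith, by linarith⟩
  · rintro ⟨h₁, h₂, h₃⟩
    rcases le_or_gt (1/2) u.1 with hx | hx
    · exact Or.inl ⟨by linarith, by linarith, by linarith⟩
    rcases le_or_gt (1/2) u.2 with hy | hy
    · exact Or.inr (Or.inl ⟨by linarith, by linarith, by linarith⟩)
    rcases le_or_gt (u.1 + u.2) (1/2) with hz | hz
    · exact Or.inr (Or.inr (Or.inl ⟨by linarith, by linarith, by linarith⟩))
    · exact Or.inr (Or.inr (Or.inr ⟨by linarith, by linarith, by linarith⟩))

theorem pairwise_aedisjoint_subdivMap_image :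
    Pairwise (Function.onFun (AEDisjoint volume) fun a => subdivMap a '' refTriangle) := by
  refine (Std.Symm.pairwise_on _).2 fun a b hab => ?_
  fin_cases a <;> fin_cases b <;> simp at hab
  on_goal 1 =>
    refine measure_mono_null ?_ (volume_setOf_snd_eq_zero (g := (1 - ·)) (by fun_prop))
  on_goal 2 =>
    refine measure_mono_null ?_ (volume_setOf_fst_eq_zero (1 / 2))
  on_goal 3 =>
    refine measure_mono_null ?_ (volume_setOf_fst_eq_zero (1 / 2))
  on_goal 4 =>
    refine measure_mono_null ?_ (volume_setOf_snd_eq_zero (g := fun _ => 1 / 2) (by fun_prop))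
  on_goal 5 =>
    refine measure_mono_null ?_ (volume_setOf_snd_eq_zero (g := fun _ => 1 / 2) (by fun_prop))
  on_goal 6 =>
    refine measure_mono_null ?_ (volume_setOf_snd_eq_zero (g := (1 / 2 - ·)) (by fun_prop))
  all_goals
    rintro u ⟨h₁, h₂⟩
    simp only [mem_subdivMap_image_iff] at h₁ h₂
    simp [refTriangle_eq, subdivShift, subdivScale] at h₁ h₂ ⊢
    linarith

theorem setIntegral_subdivMap_image (a : Fin 4) (f : ℝ × ℝ → ℝ) :
    ∫ v in subdivMap a '' refTriangle, f v = 4⁻¹ * ∫ v in refTriangle, f (subdivMap a v) := by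
  rw [subdivMap_eq, setIntegral_image_homothety volume isCompact_refTriangle.measurableSet _
    (subdivScale_ne_zero a), finrank_prod, finrank_self, smul_eq_mul]
  congr 1
  fin_cases a <;> norm_num [subdivScale]

theorem setIntegral_refTriangle_eq_sum {f : ℝ × ℝ → ℝ} (hf : IntegrableOn f refTriangle) :
    ∫ v in refTriangle, f v = 4⁻¹ * ∑ a, ∫ v in refTriangle, f (subdivMap a v) := by
  have hmeas (a : Fin 4) : NullMeasurableSet (subdivMap a '' refTriangle) := by
    rw [subdivMap_eq]
    exact (isCompact_refTriangle.image (by fun_prop)).isClosed.measurableSet.nullMeasurableSet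
  conv_lhs => rw [← iUnion_subdivMap_image]
  rw [integral_iUnion_ae hmeas pairwise_aedisjoint_subdivMap_image
      (by rwa [iUnion_subdivMap_image]), tsum_fintype, Finset.mul_sum]
  exact Finset.sum_congr rfl fun a _ => setIntegral_subdivMap_image a f

section Quadrature

variable {n : ℕ} (x : Fin n → ℝ × ℝ) (w : Fin n → ℝ)

theorem Em_zero (f : ℝ × ℝ → ℝ) : Em x w 0 f = errQ x w f := by
  simp [Em, errQ, Qm, compSubdiv]

theorem compSubdiv_cons {m : ℕ} (a : Fin 4) (s : Fin m → Fin 4) :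
    compSubdiv (Fin.cons a s : Fin (m + 1) → Fin 4) = subdivMap a ∘ compSubdiv s := by
  simp only [compSubdiv, Fin.cons_zero, Fin.cons_succ]

theorem Qm_succ (m : ℕ) (f : ℝ × ℝ → ℝ) :
    Qm x w (m + 1) f = 4⁻¹ * ∑ a, Qm x w m (f ∘ subdivMap a) := by
  unfold Qm
  rw [← (Fin.consEquiv fun _ : Fin (m + 1) => Fin 4).sum_comp
    (fun s => quadApply x w (f ∘ compSubdiv s)), Fintype.sum_prod_type]
  simp only [Fin.consEquiv, Equiv.coe_fn_mk, compSubdiv_cons, ← Function.comp_assoc]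
  rw [Finset.mul_sum, Finset.mul_sum, pow_succ, mul_inv]
  exact Finset.sum_congr rfl fun _ _ => by ring

theorem Em_succ (m : ℕ) {f : ℝ × ℝ → ℝ} (hf : IntegrableOn f refTriangle) :
    Em x w (m + 1) f = 4⁻¹ * ∑ a, Em x w m (f ∘ subdivMap a) := by
  simp only [Em, Qm_succ, setIntegral_refTriangle_eq_sum hf, Finset.sum_sub_distrib, mul_sub,
    Function.comp_apply]

theorem errQ_add {f g : ℝ × ℝ → ℝ} (hf : IntegrableOn f refTriangle)
    (hg : IntegrableOn g refTriangle) :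
    errQ x w (fun v => f v + g v) = errQ x w f + errQ x w g := by
  simp only [errQ, quadApply, integral_add hf hg, mul_add, Finset.sum_add_distrib]
  ring

theorem errQ_const_mul (c : ℝ) (f : ℝ × ℝ → ℝ) :
    errQ x w (fun v => c * f v) = c * errQ x w f := by
  simp only [errQ, quadApply, integral_const_mul, Finset.mul_sum, mul_sub]
  ring_nf

end Quadrature

noncomputable def affineSubst (t : ℝ × ℝ) (c : ℝ) :
    MvPolynomial (Fin 2) ℝ →ₐ[ℝ] MvPolynomial (Fin 2) ℝ :=
  bind₁ fun i => C (![t.1, t.2] i) + C c * X i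

theorem evalP_affineSubst (t : ℝ × ℝ) (c : ℝ) (p : MvPolynomial (Fin 2) ℝ) (v : ℝ × ℝ) :
    evalP (affineSubst t c p) v = evalP p (t + c • v) := by
  simp only [evalP, affineSubst, eval, eval₂Hom_bind₁]
  congr 2
  funext i
  fin_cases i <;> simp

theorem continuous_evalP (p : MvPolynomial (Fin 2) ℝ) : Continuous (evalP p) :=
  (continuous_eval p).comp (by fun_prop)

theorem integrableOn_evalP (p : MvPolynomial (Fin 2) ℝ) : IntegrableOn (evalP p) refTriangle :=
  (continuous_evalP p).continuousOn.integrableOn_compact isCompact_refTriangle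

theorem totalDegree_affineSubst_le (t : ℝ × ℝ) (c : ℝ) (p : MvPolynomial (Fin 2) ℝ) :
    (affineSubst t c p).totalDegree ≤ p.totalDegree :=
  totalDegree_bind₁_le (fun _ => totalDegree_C_add_C_mul_X_le _ _ _) p

theorem homogeneousComponent_affineSubst (t : ℝ × ℝ) (c : ℝ) {p : MvPolynomial (Fin 2) ℝ} {k : ℕ}
    (hp : p.totalDegree ≤ k) :
    homogeneousComponent k (affineSubst t c p) = c ^ k • homogeneousComponent k p :=
  homogeneousComponent_bind₁_C_add_C_mul_X _ _ hp

theorem evalP_comp_subdivMap (a : Fin 4) (p : MvPolynomial (Fin 2) ℝ) :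
    evalP p ∘ subdivMap a = evalP (affineSubst (subdivShift a) (subdivScale a) p) := by
  funext v
  rw [Function.comp_apply, evalP_affineSubst, subdivMap_eq]

section PolynomialError

variable {n : ℕ} (x : Fin n → ℝ × ℝ) (w : Fin n → ℝ)

theorem errQ_evalP_smul (c : ℝ) (p : MvPolynomial (Fin 2) ℝ) :
    errQ x w (evalP (c • p)) = c * errQ x w (evalP p) := by
  have h : evalP (c • p) = fun v => c * evalP p v := funext fun v => smul_eval _ _ _
  rw [h, errQ_const_mul]

theorem errQ_evalP_eq_homogeneousComponent {d : ℕ} (hexact : ExactDeg x w d)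
    {p : MvPolynomial (Fin 2) ℝ} (hp : p.totalDegree ≤ d + 1) :
    errQ x w (evalP p) = errQ x w (evalP (homogeneousComponent (d + 1) p)) := by
  set H := homogeneousComponent (d + 1) p
  have hsplit : evalP p = fun v => evalP (p - H) v + evalP H v := by
    funext v
    simp [evalP]
  rw [hsplit, errQ_add x w (integrableOn_evalP _) (integrableOn_evalP _), errQ,
    hexact _ (totalDegree_sub_homogeneousComponent_le hp), sub_self, zero_add]

end PolynomialError

theorem Em_eq_pow_general {n d : ℕ}
    (x : Fin n → ℝ × ℝ) (w : Fin n → ℝ)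
    (hexact : ExactDeg x w d)
    (m : ℕ) (p : MvPolynomial (Fin 2) ℝ) (hp : p.totalDegree ≤ d + 1) :
    Em x w m (evalP p) =
      ((3 + (-1 : ℝ) ^ (d + 1)) / 2 ^ (d + 3)) ^ m *
        errQ x w (evalP (MvPolynomial.homogeneousComponent (d + 1) p)) := by
  set c : ℝ := (3 + (-1) ^ (d + 1)) / 2 ^ (d + 3) with hc
  induction m generalizing p with
  | zero =>
    rw [Em_zero, pow_zero, one_mul]
    exact errQ_evalP_eq_homogeneousComponent x w hexact hp
  | succ m ih =>
    have hpiece : ∀ a, Em x w m (evalP p ∘ subdivMap a) =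
        c ^ m * (subdivScale a ^ (d + 1) * errQ x w (evalP (homogeneousComponent (d + 1) p))) :=
      fun a => by
        rw [evalP_comp_subdivMap, ih _ ((totalDegree_affineSubst_le _ _ p).trans hp),
          homogeneousComponent_affineSubst _ _ hp, errQ_evalP_smul]
    rw [Em_succ x w m (integrableOn_evalP p), Finset.sum_congr rfl fun a _ => hpiece a,
      ← Finset.mul_sum, ← Finset.sum_mul, sum_subdivScale_pow, pow_succ, hc]
    ring

/-- for every m and every p of total degree ≤ d+1 with degree-(d+1)
homogeneous component H, E_m(p) = ((3 + (-1)^{d+1}) / 2^{d+3})^m · E_Q(H). -/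
theorem Em_eq_pow {n d : ℕ}
    (x : Fin n → ℝ × ℝ) (w : Fin n → ℝ)
    (hx : ∀ i, x i ∈ refTriangle) (hexact : ExactDeg x w d)
    (m : ℕ) (p : MvPolynomial (Fin 2) ℝ) (hp : p.totalDegree ≤ d + 1) :
    Em x w m (evalP p) =
      ((3 + (-1 : ℝ) ^ (d + 1)) / 2 ^ (d + 3)) ^ m *
        errQ x w (evalP (MvPolynomial.homogeneousComponent (d + 1) p)) :=
  Em_eq_pow_general x w hexact m p hp
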